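/- Let G be a finite group acting on finite sets X, Y, G itself (by left multiplication), and let ε be a random variable independent of everything, uniform on (0,1). Suppose f : X × G × (0,1) → Y is jointly equivariant in its first two arguments: f(hx, hg, ε) = h·f(x, g, ε). Suppose for each x, g̃_x is a random element of G whose conditional law given X = x is equivariant: the law of g̃_{hx} equals the law of h·g̃_x. Then Y := f(X, g̃_X, ε) has an equivariant conditional distribution: P(Y ∈ B | X = h·x) = P(h·Y ∈ B | X = x) for all h ∈ G, x ∈ X, and measurable B ⊆ Y. -/
import Mathlib


open MeasureTheory

/-- Reverse direction of the representation theorem: if `f` is jointly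
equivariant in its first two arguments, the random canonicalizer `g̃` has an
equivariant conditional law given `X`, and `ε` is uniform on `(0,1)` and
independent of everything, then `Y := f(X, g̃_X, ε)` has an equivariant
conditional distribution given `X`. -/
theorem equivariant_conditional_of_jointly_equivariant
    {G X Y : Type*} [Group G] [Fintype G] [Fintype X] [Fintype Y] [DecidableEq Y]
    [MulAction G X] [MulAction G Y]
    (f : X → G → ℝ → Y)
    (hf : ∀ (h : G) (x : X) (g : G) (ε : ℝ), f (h • x) (h * g) ε = h • f x g ε)
    (p : X → G → ℝ) (hp0 : ∀ x g, 0 ≤ p x g) (hp1 : ∀ x, ∑ g, p x g = 1)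
    (hpe : ∀ (h : G) (x : X) (g : G), p (h • x) (h * g) = p x g)
    (P : X → Y → ℝ)
    (hP : ∀ (x : X) (y : Y),
      P x y = ∫ ε in Set.Ioo (0 : ℝ) 1,
        ∑ g : G, p x g * (if f x g ε = y then (1 : ℝ) else 0)) :
    ∀ (h : G) (x : X) (y : Y), P (h • x) (h • y) = P x y := by
  intro h x y
  rw [hP, hP]
  congr 1
  funext ε
  refine (Fintype.sum_equiv (Equiv.mulLeft h) _ _ fun g => ?_).symm
  simp only [Equiv.coe_mulLeft]
  rw [hpe]
  simp [hf, smul_left_cancel_iff]
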